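/- arXiv:2509.17392 — 6 statements merged into one kernel-verified Lean document; each statement's English description precedes it below -/
import Mathlib

section
/- A Van Kampen square is a pullback: if a pushout square f ∘ p = g ∘ q (pushout of the span p, q along a monomorphism) is Van Kampen, then it is also a pullback square. -/
open CategoryTheory CategoryTheory.Limits

universe v u v₂ u₂

section Defs

variable {C : Type u} [Category.{v} C]

/-- `e` is an equalizer of the parallel pair `f, g`. -/
def IsEqualizerOf {E A B : C} (f g : A ⟶ B) (e : E ⟶ A) : Prop :=
  e ≫ f = e ≫ g ∧
  ∀ ⦃E' : C⦄ (e' : E' ⟶ A), e' ≫ f = e' ≫ g → ∃! u : E' ⟶ E, e' = u ≫ e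

/-- `m` is a regular monomorphism: it is an equalizer of some parallel pair. -/
def IsRegularMono' {E A : C} (m : E ⟶ A) : Prop :=
  ∃ (B : C) (f g : A ⟶ B), IsEqualizerOf f g m

/-- The pushout square `m ≫ f = g ≫ n` is stable: for every commutative cube over it
whose four vertical faces are pullbacks, the top face is a pushout. -/
def StablePushout {Z X Y P : C} (m : Z ⟶ X) (g : Z ⟶ Y) (f : X ⟶ P) (n : Y ⟶ P) : Prop :=
  ∀ ⦃Z' X' Y' P' : C⦄ (m' : Z' ⟶ X') (g' : Z' ⟶ Y') (f' : X' ⟶ P') (n' : Y' ⟶ P')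
    (z : Z' ⟶ Z) (x : X' ⟶ X) (y : Y' ⟶ Y) (p : P' ⟶ P),
    IsPullback m' z x m → IsPullback g' z y g →
    IsPullback f' x p f → IsPullback n' y p n →
    IsPushout m' g' f' n'

/-- The pushout square `m ≫ f = g ≫ n` is exact: for every commutative cube over it
whose back and left faces are pullbacks and whose top face is a pushout,
the right and front faces are pullbacks. -/
def ExactPushout {Z X Y P : C} (m : Z ⟶ X) (g : Z ⟶ Y) (f : X ⟶ P) (n : Y ⟶ P) : Prop :=
  ∀ ⦃Z' X' Y' P' : C⦄ (m' : Z' ⟶ X') (g' : Z' ⟶ Y') (f' : X' ⟶ P') (n' : Y' ⟶ P')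
    (z : Z' ⟶ Z) (x : X' ⟶ X) (y : Y' ⟶ Y) (p : P' ⟶ P),
    IsPullback m' z x m → IsPullback g' z y g →
    f' ≫ p = x ≫ f → n' ≫ p = y ≫ n →
    IsPushout m' g' f' n' →
    IsPullback f' x p f ∧ IsPullback n' y p n

/-- A Van Kampen pushout square is one that is both stable and exact. -/
def VanKampenPushout {Z X Y P : C} (m : Z ⟶ X) (g : Z ⟶ Y) (f : X ⟶ P) (n : Y ⟶ P) : Prop :=
  StablePushout m g f n ∧ ExactPushout m g f n

/-- `m` is pre-adhesive: pushouts of `m` along any morphism exist,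
and all such pushouts are stable and are pullbacks. -/
def Preadhesive {Z X : C} (m : Z ⟶ X) : Prop :=
  ∀ ⦃Y : C⦄ (g : Z ⟶ Y),
    (∃ (P : C) (f : X ⟶ P) (n : Y ⟶ P), IsPushout m g f n) ∧
    ∀ ⦃P : C⦄ (f : X ⟶ P) (n : Y ⟶ P), IsPushout m g f n →
      StablePushout m g f n ∧ IsPullback m g f n

/-- `m` is adhesive: every pullback of `m` along any morphism is pre-adhesive. -/
def AdhesiveMorphism {Z X : C} (m : Z ⟶ X) : Prop :=
  ∀ ⦃V W : C⦄ (p : V ⟶ Z) (q : V ⟶ W) (h : W ⟶ X),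
    IsPullback p q m h → Preadhesive q

end Defs

/-- A category is rm-quasiadhesive if it has all pullbacks, pushouts along
regular monos, and these pushouts are stable and are pullbacks. -/
structure RmQuasiadhesive (C : Type u) [Category.{v} C] : Prop where
  hasPullbacks : HasPullbacks C
  pushouts : ∀ ⦃Z X Y : C⦄ (m : Z ⟶ X) (g : Z ⟶ Y), IsRegularMono' m →
    ∃ (P : C) (f : X ⟶ P) (n : Y ⟶ P), IsPushout m g f n
  stable : ∀ ⦃Z X Y P : C⦄ (m : Z ⟶ X) (g : Z ⟶ Y) (f : X ⟶ P) (n : Y ⟶ P),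
    IsRegularMono' m → IsPushout m g f n → StablePushout m g f n
  pullback : ∀ ⦃Z X Y P : C⦄ (m : Z ⟶ X) (g : Z ⟶ Y) (f : X ⟶ P) (n : Y ⟶ P),
    IsRegularMono' m → IsPushout m g f n → IsPullback m g f n

/-- A category is rm-adhesive if it has all pullbacks, pushouts along regular
monos, and these pushouts are Van Kampen. -/
structure RmAdhesiveCat (C : Type u) [Category.{v} C] : Prop where
  hasPullbacks : HasPullbacks C
  pushouts : ∀ ⦃Z X Y : C⦄ (m : Z ⟶ X) (g : Z ⟶ Y), IsRegularMono' m →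
    ∃ (P : C) (f : X ⟶ P) (n : Y ⟶ P), IsPushout m g f n
  vanKampen : ∀ ⦃Z X Y P : C⦄ (m : Z ⟶ X) (g : Z ⟶ Y) (f : X ⟶ P) (n : Y ⟶ P),
    IsRegularMono' m → IsPushout m g f n → VanKampenPushout m g f n

/-- A category is adhesive if it has all pullbacks, pushouts along monos,
and these pushouts are Van Kampen. -/
structure AdhesiveCat (C : Type u) [Category.{v} C] : Prop where
  hasPullbacks : HasPullbacks C
  pushouts : ∀ ⦃Z X Y : C⦄ (m : Z ⟶ X) (g : Z ⟶ Y), Mono m →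
    ∃ (P : C) (f : X ⟶ P) (n : Y ⟶ P), IsPushout m g f n
  vanKampen : ∀ ⦃Z X Y P : C⦄ (m : Z ⟶ X) (g : Z ⟶ Y) (f : X ⟶ P) (n : Y ⟶ P),
    Mono m → IsPushout m g f n → VanKampenPushout m g f n

/-- Regular subobjects are closed under binary union: any two regular subobjects
of `X` have a least upper bound in the poset of subobjects of `X`, which is
again a regular subobject. -/
def RegularSubobjectsClosedUnderUnion (C : Type u) [Category.{v} C] : Prop :=
  ∀ ⦃A B X : C⦄ (m : A ⟶ X) (n : B ⟶ X), IsRegularMono' m → IsRegularMono' n →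
    ∃ (U : C) (u : U ⟶ X) (a : A ⟶ U) (b : B ⟶ U),
      IsRegularMono' u ∧ a ≫ u = m ∧ b ≫ u = n ∧
      ∀ ⦃V : C⦄ (v : V ⟶ X), Mono v →
        (∃ a' : A ⟶ V, a' ≫ v = m) → (∃ b' : B ⟶ V, b' ≫ v = n) →
        ∃ w : U ⟶ V, w ≫ v = u

/-- A Van Kampen pushout square along a monomorphism is also a pullback. -/
theorem stmt7 {C : Type u} [Category.{v} C] {Z X Y P : C}
    (m : Z ⟶ X) (g : Z ⟶ Y) (f : X ⟶ P) (n : Y ⟶ P)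
    (hm : Mono m) (hpo : IsPushout m g f n) (hvk : VanKampenPushout m g f n) :
    IsPullback m g f n := by
  have back : IsPullback (𝟙 Z) (𝟙 Z) m m := IsKernelPair.id_of_mono m
  have left : IsPullback g (𝟙 Z) (𝟙 Y) g := IsPullback.of_vert_isIso ⟨by simp⟩
  have top : IsPushout (𝟙 Z) g g (𝟙 Y) := IsPushout.of_horiz_isIso ⟨by simp⟩
  have h := hvk.2 (𝟙 Z) g g (𝟙 Y) (𝟙 Z) m (𝟙 Y) n back left
    (by simpa using hpo.w.symm) (by simp) top
  exact h.1.flip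
end

section
/- In a Van Kampen pushout square along a monomorphism, the opposite side is also a monomorphism: if the pushout of m : C → A (a mono) along g : C → B is Van Kampen, with resulting square containing n : B → D, then n is a monomorphism. -/
open CategoryTheory CategoryTheory.Limits

universe v u v₂ u₂

/-- In a Van Kampen pushout square along a mono, the opposite side is a mono. -/
theorem stmt8 {C : Type u} [Category.{v} C] {Z X Y P : C}
    (m : Z ⟶ X) (g : Z ⟶ Y) (f : X ⟶ P) (n : Y ⟶ P)
    (hm : Mono m) (hpo : IsPushout m g f n) (hvk : VanKampenPushout m g f n) :
    Mono n := by
  -- Build a cube over the square with back face the kernel-pair square of `m`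
  -- (a pullback since `m` is mono), left face the identity square of `g`,
  -- and top face the pushout `IsPushout (𝟙 Z) g g (𝟙 Y)`.
  have hback : IsPullback (𝟙 Z) (𝟙 Z) m m := IsKernelPair.id_of_mono m
  have hleft : IsPullback g (𝟙 Z) (𝟙 Y) g :=
    IsPullback.of_vert_isIso ⟨by simp⟩
  have htop : IsPushout (𝟙 Z) g g (𝟙 Y) :=
    IsPushout.of_horiz_isIso ⟨by simp⟩
  have h := hvk.2 (𝟙 Z) g g (𝟙 Y) (𝟙 Z) m (𝟙 Y) n hback hleft
    (by simpa using hpo.w.symm) (by simp) htop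
  -- The front face `IsPullback (𝟙 Y) (𝟙 Y) n n` gives that `n` is mono.
  have hfront : IsPullback (𝟙 Y) (𝟙 Y) n n := h.2
  constructor
  intro T a b hab
  have := hfront.isLimit
  calc a = hfront.lift a b (by simpa using hab) ≫ 𝟙 Y :=
        (hfront.lift_fst a b (by simpa using hab)).symm
    _ = hfront.lift a b (by simpa using hab) ≫ 𝟙 Y := rfl
    _ = b := hfront.lift_snd a b (by simpa using hab)
end

section
/- Every adhesive morphism is pre-adhesive, and every pre-adhesive morphism is a regular monomorphism. -/
open CategoryTheory CategoryTheory.Limits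

universe v u v₂ u₂

/-- Adhesive morphisms are pre-adhesive, and pre-adhesive morphisms are regular monos. -/
theorem stmt9 {C : Type u} [Category.{v} C] :
    (∀ {Z X : C} (m : Z ⟶ X), AdhesiveMorphism m → Preadhesive m) ∧
    (∀ {Z X : C} (m : Z ⟶ X), Preadhesive m → IsRegularMono' m) := by
  constructor
  · intro Z X m h
    exact h (𝟙 Z) m (𝟙 X) (IsPullback.of_horiz_isIso ⟨by simp⟩)
  · intro Z X m h
    obtain ⟨⟨P, f, n, hpo⟩, hall⟩ := h m
    obtain ⟨-, hpb⟩ := hall f n hpo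
    refine ⟨P, f, n, hpo.w, fun E' e' he' => ?_⟩
    refine ⟨hpb.lift e' e' he', (hpb.lift_fst e' e' he').symm, fun u hu => ?_⟩
    apply hpb.hom_ext <;> simp [hu]
end

section
/- In an rm-quasiadhesive category, regular monomorphisms are closed under composition. -/
open CategoryTheory CategoryTheory.Limits

universe v u v₂ u₂

/-- In an rm-quasiadhesive category, regular monos compose. -/
theorem stmt11 {C : Type u} [Category.{v} C] (h : RmQuasiadhesive C)
    {A B D : C} (f : A ⟶ B) (g : B ⟶ D)
    (hf : IsRegularMono' f) (hg : IsRegularMono' g) : IsRegularMono' (f ≫ g) := by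
  obtain ⟨P1, r, s, h1⟩ := h.pushouts f f hf
  obtain ⟨Q, p, t, h2⟩ := h.pushouts g r hg
  obtain ⟨R, q, w, h3⟩ := h.pushouts g (s ≫ t) hg
  have pb1 := h.pullback f f r s hf h1
  have pb2 := h.pullback g r p t hg h2
  have pb3 := h.pullback g (s ≫ t) q w hg h3
  have big : IsPullback (f ≫ g) (f ≫ g) (p ≫ w) q :=
    (pb1.paste_horiz pb2).paste_vert pb3.flip
  refine ⟨R, p ≫ w, q, by simpa using big.w, ?_⟩
  intro E' e' he
  have he' : e' ≫ (p ≫ w) = e' ≫ q := he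
  refine ⟨big.lift e' e' he', (big.lift_fst e' e' he').symm, ?_⟩
  intro u hu
  apply big.hom_ext
  · rw [big.lift_fst, ← hu]
  · rw [big.lift_snd, ← hu]
end

section
/- In an rm-quasiadhesive category, pushouts along regular monomorphisms preserve regular monomorphisms: in a pushout square of a regular mono m : C → A along g : C → B, the opposite morphism n : B → D is a regular monomorphism. -/
open CategoryTheory CategoryTheory.Limits

universe v u v₂ u₂

private lemma mono_of_isRegularMono'_aux {C : Type u} [Category.{v} C] {E A : C} {m : E ⟶ A}
    (hm : IsRegularMono' m) : Mono m := by
  obtain ⟨B, f, g, hcomm, huniv⟩ := hm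
  constructor
  intro T a b hab
  have h1 : (a ≫ m) ≫ f = (a ≫ m) ≫ g := by
    rw [Category.assoc, Category.assoc, hcomm]
  obtain ⟨u, hu, huu⟩ := huniv (a ≫ m) h1
  rw [huu a rfl, huu b hab]

/-- In an rm-quasiadhesive category, pushouts along regular monos preserve regular monos. -/
theorem stmt12 {C : Type u} [Category.{v} C] (h : RmQuasiadhesive C)
    {Z X Y P : C} (m : Z ⟶ X) (g : Z ⟶ Y) (f : X ⟶ P) (n : Y ⟶ P)
    (hm : IsRegularMono' m) (hpo : IsPushout m g f n) : IsRegularMono' n := by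
  have hPB : HasPullbacks C := h.hasPullbacks
  have hmono_m : Mono m := mono_of_isRegularMono'_aux hm
  have hOpb : IsPullback m g f n := h.pullback m g f n hm hpo
  -- Step 1 : n is a monomorphism
  have hmono_n : Mono n := by
    set π₁ : pullback n n ⟶ Y := pullback.fst n n with hπ₁
    set π₂ : pullback n n ⟶ Y := pullback.snd n n with hπ₂
    have hδw : g ≫ n = g ≫ n := rfl
    set δ : Z ⟶ pullback n n := pullback.lift g g hδw with hδ
    have hδ₁ : δ ≫ π₁ = g := pullback.lift_fst _ _ _
    have hδ₂ : δ ≫ π₂ = g := pullback.lift_snd _ _ _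
    have face1 : IsPullback (𝟙 Z) (𝟙 Z) m m := IsKernelPair.id_of_mono m
    have face3 : IsPullback g m n f := hOpb.flip
    have face4 : IsPullback π₂ π₁ n n := (IsPullback.of_hasPullback n n).flip
    have face2 : IsPullback δ (𝟙 Z) π₁ g := by
      have big : IsPullback (δ ≫ π₂) (𝟙 Z) n (g ≫ n) := by
        have hb := face1.paste_horiz face3
        rw [hpo.w] at hb
        rw [hδ₂]
        simpa using hb
      exact big.of_right (by rw [hδ₁, Category.id_comp]) face4
    have htopN : IsPushout (𝟙 Z) δ g π₂ :=
      h.stable m g f n hm hpo (𝟙 Z) δ g π₂ (𝟙 Z) m π₁ n face1 face2 face3 face4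
    have hqw : (𝟙 Z) ≫ δ = δ ≫ 𝟙 (pullback n n) := by simp
    set q : Y ⟶ pullback n n := htopN.desc δ (𝟙 _) hqw with hq
    have hq1 : g ≫ q = δ := htopN.inl_desc _ _ _
    have hq2 : π₂ ≫ q = 𝟙 _ := htopN.inr_desc _ _ _
    have hqπ : q ≫ π₂ = 𝟙 Y := by
      apply htopN.hom_ext
      · rw [← Category.assoc, hq1, hδ₂, Category.comp_id]
      · rw [← Category.assoc, hq2, Category.id_comp, Category.comp_id]
    have hΔw : (𝟙 Y) ≫ n = (𝟙 Y) ≫ n := rfl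
    set Δ : Y ⟶ pullback n n := pullback.lift (𝟙 Y) (𝟙 Y) hΔw with hΔ
    have hΔ₂ : Δ ≫ π₂ = 𝟙 Y := pullback.lift_snd _ _ _
    have hΔq : Δ = q := by
      rw [← Category.id_comp q, ← hΔ₂, Category.assoc, hq2, Category.comp_id]
    have hqπ₁ : q ≫ π₁ = 𝟙 Y := by
      rw [← hΔq]; exact pullback.lift_fst _ _ _
    have hππ : π₁ = π₂ := by
      calc π₁ = (π₂ ≫ q) ≫ π₁ := by rw [hq2, Category.id_comp]
        _ = π₂ ≫ (q ≫ π₁) := by rw [Category.assoc]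
        _ = π₂ := by rw [hqπ₁, Category.comp_id]
    constructor
    intro T a b hab
    have hl₁ : pullback.lift a b hab ≫ π₁ = a := pullback.lift_fst _ _ _
    have hl₂ : pullback.lift a b hab ≫ π₂ = b := pullback.lift_snd _ _ _
    rw [← hl₁, hππ, hl₂]
  -- Step 2 : the cokernel pair of n
  obtain ⟨R, j, r₂, hbig⟩ := h.pushouts m (g ≫ n) hm
  have hbigpb : IsPullback m (g ≫ n) j r₂ := h.pullback _ _ _ _ hm hbig
  have hr₁w : m ≫ j = g ≫ (n ≫ r₂) := by rw [← Category.assoc]; exact hbig.w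
  set r₁ : P ⟶ R := hpo.desc j (n ≫ r₂) hr₁w with hr₁def
  have hfr₁ : f ≫ r₁ = j := hpo.inl_desc _ _ _
  have hnr : n ≫ r₁ = n ≫ r₂ := hpo.inr_desc _ _ _
  refine ⟨R, r₁, r₂, hnr, ?_⟩
  -- Step 3 : universal property
  intro T e he
  set x : pullback f e ⟶ X := pullback.fst f e with hx
  set f' : pullback f e ⟶ T := pullback.snd f e with hf'
  set y : pullback n e ⟶ Y := pullback.fst n e with hy
  set n' : pullback n e ⟶ T := pullback.snd n e with hn'
  set m' : pullback x m ⟶ pullback f e := pullback.fst x m with hm'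
  set z : pullback x m ⟶ Z := pullback.snd x m with hz
  have hZcond : m' ≫ x = z ≫ m := pullback.condition
  have hXcond : x ≫ f = f' ≫ e := pullback.condition
  have hYcond : y ≫ n = n' ≫ e := pullback.condition
  have hg'w : (z ≫ g) ≫ n = (m' ≫ f') ≫ e := by
    rw [Category.assoc, ← hpo.w, ← Category.assoc, ← hZcond, Category.assoc, hXcond,
      Category.assoc]
  set g' : pullback x m ⟶ pullback n e := pullback.lift (z ≫ g) (m' ≫ f') hg'w with hg'
  have hg'y : g' ≫ y = z ≫ g := pullback.lift_fst _ _ _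
  have hg'n' : g' ≫ n' = m' ≫ f' := pullback.lift_snd _ _ _
  have face1 : IsPullback m' z x m := IsPullback.of_hasPullback x m
  have face3 : IsPullback f' x e f := (IsPullback.of_hasPullback f e).flip
  have face4 : IsPullback n' y e n := (IsPullback.of_hasPullback n e).flip
  have face2 : IsPullback g' z y g := by
    have big : IsPullback (g' ≫ n') z e (g ≫ n) := by
      have hb := face1.paste_horiz face3
      rw [hpo.w] at hb
      rw [hg'n']
      exact hb
    exact big.of_right hg'y face4
  have htop : IsPushout m' g' f' n' :=
    h.stable m g f n hm hpo m' g' f' n' z x y e face1 face2 face3 face4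
  have hww : x ≫ j = (f' ≫ e) ≫ r₂ := by
    rw [← hfr₁, ← Category.assoc, hXcond, Category.assoc, he, Category.assoc]
  set w : pullback f e ⟶ Z := hbigpb.lift x (f' ≫ e) hww with hwdef
  have hw1 : w ≫ m = x := hbigpb.lift_fst _ _ _
  have hw2 : w ≫ (g ≫ n) = f' ≫ e := hbigpb.lift_snd _ _ _
  have hmw : m' ≫ w = z := by
    apply hbigpb.hom_ext
    · rw [Category.assoc, hw1, hZcond]
    · calc (m' ≫ w) ≫ (g ≫ n) = m' ≫ (w ≫ (g ≫ n)) := by rw [Category.assoc]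
        _ = m' ≫ (f' ≫ e) := by rw [hw2]
        _ = m' ≫ (x ≫ f) := by rw [hXcond]
        _ = (m' ≫ x) ≫ f := by rw [Category.assoc]
        _ = (z ≫ m) ≫ f := by rw [hZcond]
        _ = z ≫ (m ≫ f) := by rw [Category.assoc]
        _ = z ≫ (g ≫ n) := by rw [hpo.w]
  have huw : m' ≫ (w ≫ g) = g' ≫ y := by
    rw [← Category.assoc, hmw, hg'y]
  set u : T ⟶ Y := htop.desc (w ≫ g) y huw with hudef
  have hu1 : f' ≫ u = w ≫ g := htop.inl_desc _ _ _
  have hu2 : n' ≫ u = y := htop.inr_desc _ _ _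
  have hun : u ≫ n = e := by
    apply htop.hom_ext
    · rw [← Category.assoc, hu1, Category.assoc, hw2]
    · rw [← Category.assoc, hu2, hYcond]
  refine ⟨u, hun.symm, fun v hv => ?_⟩
  rw [← cancel_mono n, hun, ← hv]
end

section
/- In an rm-quasiadhesive category, binary unions of regular subobjects exist: any two regular subobjects m : A ↪ X, n : B ↪ X have a least upper bound (binary join) in the poset of subobjects of X, computed as the pushout over the intersection A ∩ B. -/
open CategoryTheory CategoryTheory.Limits

universe v u v₂ u₂

section Aux

variable {C : Type u} [Category.{v} C]

theorem mono_of_isEqualizerOf {E A B : C} {f g : A ⟶ B} {e : E ⟶ A}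
    (h : IsEqualizerOf f g e) : Mono e := by
  have hfg : e ≫ f = e ≫ g := h.1
  have huniv := h.2
  constructor
  intro Z p q hpq
  obtain ⟨l, -, hu⟩ := huniv (p ≫ e)
    (by rw [Category.assoc, Category.assoc, hfg])
  exact (hu p rfl).trans (hu q hpq).symm

theorem mono_of_isRegularMono' {E A : C} {m : E ⟶ A} (h : IsRegularMono' m) : Mono m := by
  obtain ⟨B, f, g, he⟩ := h
  exact mono_of_isEqualizerOf he

/-- The pullback of a regular mono is a regular mono. -/
theorem isRegularMono'_of_isPullback {P A B X : C} {pa : P ⟶ A} {pb : P ⟶ B}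
    {m : A ⟶ X} {n : B ⟶ X} (hP : IsPullback pa pb m n) (hn : IsRegularMono' n) :
    IsRegularMono' pa := by
  obtain ⟨Y, f, g, he⟩ := hn
  have hfg : n ≫ f = n ≫ g := he.1
  have huniv := he.2
  refine ⟨Y, m ≫ f, m ≫ g, ?_, ?_⟩
  · rw [← Category.assoc, ← Category.assoc, hP.w, Category.assoc, Category.assoc, hfg]
  · intro E' e' he'
    have hcond : (e' ≫ m) ≫ f = (e' ≫ m) ≫ g := by
      rw [Category.assoc, Category.assoc]; exact he'
    obtain ⟨t, ht, htu⟩ := huniv (e' ≫ m) hcond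
    refine ⟨hP.lift e' t ht, (hP.lift_fst e' t ht).symm, ?_⟩
    intro l' hl'
    have hpbn : e' ≫ m = (l' ≫ pb) ≫ n := by
      rw [hl', Category.assoc, Category.assoc, hP.w, ← Category.assoc]
    apply hP.hom_ext
    · rw [hP.lift_fst, ← hl']
    · rw [hP.lift_snd, htu (l' ≫ pb) hpbn]

end Aux

/-- In an rm-quasiadhesive category, binary unions of regular subobjects exist,
computed as the pushout over the intersection. -/
theorem stmt13 {C : Type u} [Category.{v} C] (h : RmQuasiadhesive C)
    {A B X : C} (m : A ⟶ X) (n : B ⟶ X)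
    (hm : IsRegularMono' m) (hn : IsRegularMono' n)
    {P : C} (pa : P ⟶ A) (pb : P ⟶ B) (hP : IsPullback pa pb m n) :
    ∃ (U : C) (ja : A ⟶ U) (jb : B ⟶ U) (u : U ⟶ X),
      IsPushout pa pb ja jb ∧ Mono u ∧ ja ≫ u = m ∧ jb ≫ u = n ∧
      ∀ ⦃V : C⦄ (v : V ⟶ X), Mono v →
        (∃ a : A ⟶ V, a ≫ v = m) → (∃ b : B ⟶ V, b ≫ v = n) →
        ∃ w : U ⟶ V, w ≫ v = u := by
  haveI := h.hasPullbacks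
  have monom : Mono m := mono_of_isRegularMono' hm
  have monon : Mono n := mono_of_isRegularMono' hn
  have hpa : IsRegularMono' pa := isRegularMono'_of_isPullback hP hn
  obtain ⟨U, ja, jb, hU⟩ := h.pushouts pa pb hpa
  have hstab := h.stable pa pb ja jb hpa hU
  set u : U ⟶ X := hU.desc m n hP.w with hu_def
  have hum : ja ≫ u = m := hU.inl_desc m n hP.w
  have hun : jb ≫ u = n := hU.inr_desc m n hP.w
  -- Pulling back the pushout square along any map `q : Q ⟶ U` gives a
  -- jointly epic pair over `Q`, by stability.
  have cube : ∀ {Q : C} (q : Q ⟶ U), ∃ (AQ BQ : C) (πA : AQ ⟶ A) (aQ : AQ ⟶ Q)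
      (πB : BQ ⟶ B) (bQ : BQ ⟶ Q), aQ ≫ q = πA ≫ ja ∧ bQ ≫ q = πB ≫ jb ∧
      ∀ {W : C} (s₁ s₂ : Q ⟶ W), aQ ≫ s₁ = aQ ≫ s₂ → bQ ≫ s₁ = bQ ≫ s₂ → s₁ = s₂ := by
    intro Q q
    have hA : IsPullback (pullback.fst ja q) (pullback.snd ja q) ja q :=
      IsPullback.of_hasPullback ja q
    have hB : IsPullback (pullback.fst jb q) (pullback.snd jb q) jb q :=
      IsPullback.of_hasPullback jb q
    have hPQ : IsPullback (pullback.fst (pa ≫ ja) q) (pullback.snd (pa ≫ ja) q)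
        (pa ≫ ja) q := IsPullback.of_hasPullback (pa ≫ ja) q
    have hPQ' : IsPullback (pullback.fst (pa ≫ ja) q) (pullback.snd (pa ≫ ja) q)
        (pb ≫ jb) q := hU.w ▸ hPQ
    set pa' : pullback (pa ≫ ja) q ⟶ pullback ja q :=
      hA.lift (pullback.fst (pa ≫ ja) q ≫ pa) (pullback.snd (pa ≫ ja) q)
        (by rw [Category.assoc]; exact hPQ.w) with hpa'_def
    set pb' : pullback (pa ≫ ja) q ⟶ pullback jb q :=
      hB.lift (pullback.fst (pa ≫ ja) q ≫ pb) (pullback.snd (pa ≫ ja) q)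
        (by rw [Category.assoc]; exact hPQ'.w) with hpb'_def
    have face_pa : IsPullback pa' (pullback.fst (pa ≫ ja) q) (pullback.fst ja q) pa := by
      apply IsPullback.of_right _ (hA.lift_fst _ _ _) hA.flip
      rw [show pa' ≫ pullback.snd ja q = pullback.snd (pa ≫ ja) q from hA.lift_snd _ _ _]
      exact hPQ.flip
    have face_pb : IsPullback pb' (pullback.fst (pa ≫ ja) q) (pullback.fst jb q) pb := by
      apply IsPullback.of_right _ (hB.lift_fst _ _ _) hB.flip
      rw [show pb' ≫ pullback.snd jb q = pullback.snd (pa ≫ ja) q from hB.lift_snd _ _ _]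
      exact hPQ'.flip
    have hpo : IsPushout pa' pb' (pullback.snd ja q) (pullback.snd jb q) :=
      hstab pa' pb' (pullback.snd ja q) (pullback.snd jb q)
        (pullback.fst (pa ≫ ja) q) (pullback.fst ja q) (pullback.fst jb q) q
        face_pa face_pb hA.flip hB.flip
    exact ⟨pullback ja q, pullback jb q, pullback.fst ja q, pullback.snd ja q,
      pullback.fst jb q, pullback.snd jb q, hA.w.symm, hB.w.symm,
      fun s₁ s₂ h₁ h₂ => hpo.hom_ext h₁ h₂⟩
  -- Key lemma A: any map to `U` that lies over `A` factors as expected.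
  have keyA : ∀ {Z : C} (α : Z ⟶ A) (β : Z ⟶ U), α ≫ m = β ≫ u → β = α ≫ ja := by
    intro Z α β hαβ
    obtain ⟨AQ, BQ, πA, aQ, πB, bQ, hA, hB, jepi⟩ := cube β
    apply jepi
    · have hπ : πA = aQ ≫ α := by
        rw [← cancel_mono m]
        calc πA ≫ m = πA ≫ ja ≫ u := by rw [hum]
          _ = (aQ ≫ β) ≫ u := by rw [← Category.assoc, ← hA]
          _ = aQ ≫ α ≫ m := by rw [Category.assoc, ← hαβ]
          _ = (aQ ≫ α) ≫ m := by rw [Category.assoc]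
      rw [hA, hπ, Category.assoc]
    · have hw : (bQ ≫ α) ≫ m = πB ≫ n := by
        calc (bQ ≫ α) ≫ m = bQ ≫ α ≫ m := by rw [Category.assoc]
          _ = (bQ ≫ β) ≫ u := by rw [hαβ, Category.assoc]
          _ = πB ≫ jb ≫ u := by rw [hB, Category.assoc]
          _ = πB ≫ n := by rw [hun]
      calc bQ ≫ β = πB ≫ jb := hB
        _ = (hP.lift (bQ ≫ α) πB hw ≫ pb) ≫ jb := by rw [hP.lift_snd]
        _ = (hP.lift (bQ ≫ α) πB hw ≫ pa) ≫ ja := by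
            rw [Category.assoc, Category.assoc, hU.w]
        _ = bQ ≫ α ≫ ja := by rw [hP.lift_fst, Category.assoc]
  -- Key lemma B: symmetric version over `B`.
  have keyB : ∀ {Z : C} (α : Z ⟶ B) (β : Z ⟶ U), α ≫ n = β ≫ u → β = α ≫ jb := by
    intro Z α β hαβ
    obtain ⟨AQ, BQ, πA, aQ, πB, bQ, hA, hB, jepi⟩ := cube β
    apply jepi
    · have hw : πA ≫ m = (aQ ≫ α) ≫ n := by
        calc πA ≫ m = πA ≫ ja ≫ u := by rw [hum]
          _ = (aQ ≫ β) ≫ u := by rw [← Category.assoc, ← hA]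
          _ = aQ ≫ α ≫ n := by rw [Category.assoc, ← hαβ]
          _ = (aQ ≫ α) ≫ n := by rw [Category.assoc]
      calc aQ ≫ β = πA ≫ ja := hA
        _ = (hP.lift πA (aQ ≫ α) hw ≫ pa) ≫ ja := by rw [hP.lift_fst]
        _ = (hP.lift πA (aQ ≫ α) hw ≫ pb) ≫ jb := by
            rw [Category.assoc, Category.assoc, hU.w]
        _ = aQ ≫ α ≫ jb := by rw [hP.lift_snd, Category.assoc]
    · have hπ : πB = bQ ≫ α := by
        rw [← cancel_mono n]
        calc πB ≫ n = πB ≫ jb ≫ u := by rw [hun]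
          _ = (bQ ≫ β) ≫ u := by rw [← Category.assoc, ← hB]
          _ = bQ ≫ α ≫ n := by rw [Category.assoc, ← hαβ]
          _ = (bQ ≫ α) ≫ n := by rw [Category.assoc]
      rw [hB, hπ, Category.assoc]
  -- `u` is a monomorphism.
  have monou : Mono u := by
    constructor
    intro T t₁ t₂ ht
    obtain ⟨AQ, BQ, πA, aQ, πB, bQ, hA, hB, jepi⟩ := cube t₁
    apply jepi
    · have h2 : aQ ≫ t₂ = πA ≫ ja := by
        apply keyA
        calc πA ≫ m = πA ≫ ja ≫ u := by rw [hum]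
          _ = (aQ ≫ t₁) ≫ u := by rw [← Category.assoc, ← hA]
          _ = (aQ ≫ t₂) ≫ u := by rw [Category.assoc, ht, Category.assoc]
      rw [hA, h2]
    · have h2 : bQ ≫ t₂ = πB ≫ jb := by
        apply keyB
        calc πB ≫ n = πB ≫ jb ≫ u := by rw [hun]
          _ = (bQ ≫ t₁) ≫ u := by rw [← Category.assoc, ← hB]
          _ = (bQ ≫ t₂) ≫ u := by rw [Category.assoc, ht, Category.assoc]
      rw [hB, h2]
  refine ⟨U, ja, jb, u, hU, monou, hum, hun, ?_⟩
  intro V v hv ha hb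
  obtain ⟨a, ha⟩ := ha
  obtain ⟨b, hb⟩ := hb
  have hcomm : pa ≫ a = pb ≫ b := by
    rw [← cancel_mono v, Category.assoc, Category.assoc, ha, hb, hP.w]
  refine ⟨hU.desc a b hcomm, ?_⟩
  apply hU.hom_ext
  · rw [← Category.assoc, hU.inl_desc, ha, hum]
  · rw [← Category.assoc, hU.inr_desc, hb, hun]
end
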